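/- arXiv:2404.18556 — 4 statements merged into one kernel-verified Lean document; each statement's English description precedes it below -/
import Mathlib

section
/- Let q(x) = N(x | μ, Γ) be a Gaussian density on R^d with positive-definite covariance Γ, π a strictly positive continuously differentiable density, Φ(x) = log π(x) − log q(x), and q_γ(x) ∝ q(x) e^{γΦ(x)} for γ ∈ (0,1]. Then the covariance of q_γ satisfies cov_{q_γ}[X] = Γ + γ cov_{q_γ}[Γ∇Φ(X), X], under suitable integrability and decay conditions. -/
open MeasureTheory Real Filter Matrix
lemma integral_deriv_zero_of_tendsto (g g' : ℝ → ℝ)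
    (hd : ∀ t, HasDerivAt g (g' t) t) (hint : Integrable g')
    (htop : Tendsto g atTop (nhds 0)) (hbot : Tendsto g atBot (nhds 0)) :
    ∫ t, g' t = 0 := by
  have h1 : ∫ t in Set.Iic (0:ℝ), g' t = g 0 - 0 :=
    MeasureTheory.integral_Iic_of_hasDerivAt_of_tendsto' (fun x _ => hd x)
      hint.integrableOn hbot
  have h2 : ∫ t in Set.Ioi (0:ℝ), g' t = 0 - g 0 :=
    MeasureTheory.integral_Ioi_of_hasDerivAt_of_tendsto' (fun x _ => hd x)
      hint.integrableOn htop
  rw [← intervalIntegral.integral_Iic_add_Ioi (b := (0:ℝ)) hint.integrableOn hint.integrableOn, h1, h2]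
  ring

lemma update_insertNth {n : ℕ} (k : Fin (n+1)) (y : Fin n → ℝ) (t s : ℝ) :
    Function.update (Fin.insertNth (α := fun _ => ℝ) k t y) k s = Fin.insertNth (α := fun _ => ℝ) k s y := by
  funext i
  rcases eq_or_ne i k with rfl | h
  · simp
  · rw [Function.update_of_ne h]
    rcases Fin.exists_succAbove_eq h with ⟨l, rfl⟩
    simp

lemma tendsto_insertNth_cocompact {n : ℕ} (k : Fin (n+1)) (y : Fin n → ℝ) :
    Tendsto (fun t : ℝ => Fin.insertNth (α := fun _ => ℝ) k t y) (cocompact ℝ) (cocompact (Fin (n+1) → ℝ)) := by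
  rw [hasBasis_cocompact.tendsto_right_iff]
  intro K hK
  obtain ⟨R, hR⟩ := hK.isBounded.subset_closedBall 0
  rw [hasBasis_cocompact.eventually_iff]
  refine ⟨Metric.closedBall 0 R, isCompact_closedBall _ _, fun t ht => ?_⟩
  intro htK
  apply ht
  have h1 : |t| ≤ ‖Fin.insertNth (α := fun _ => ℝ) k t y‖ := by
    have := norm_le_pi_norm (Fin.insertNth (α := fun _ => ℝ) k t y) k
    simpa using this
  have := hR htK
  simp only [Metric.mem_closedBall, dist_zero_right] at this ⊢
  exact h1.trans this

lemma integral_pderiv_eq_zero {n : ℕ} (k : Fin (n+1)) (f f' : (Fin (n+1) → ℝ) → ℝ)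
    (hd : ∀ (y : Fin (n+1) → ℝ) (t : ℝ),
      HasDerivAt (fun s => f (Function.update y k s)) (f' (Function.update y k t)) t)
    (hint : Integrable f')
    (hlim : Tendsto f (cocompact (Fin (n+1) → ℝ)) (nhds 0)) :
    ∫ x, f' x = 0 := by
  classical
  set e := MeasurableEquiv.piFinSuccAbove (fun _ : Fin (n+1) => ℝ) k with he
  have mp : MeasurePreserving e volume volume :=
    MeasureTheory.volume_preserving_piFinSuccAbove _ k
  have mps : MeasurePreserving e.symm volume volume := mp.symm e
  have hsymm : ∀ p : ℝ × (Fin n → ℝ),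
      e.symm p = Fin.insertNth (α := fun _ => ℝ) k p.1 p.2 := by
    intro p; rfl
  have hcomp : ∫ x, f' x = ∫ p : ℝ × (Fin n → ℝ), f' (e.symm p) :=
    (mps.integral_comp' f').symm
  rw [hcomp]
  have hint2 : Integrable (fun p : ℝ × (Fin n → ℝ) => f' (e.symm p)) volume :=
    (mps.integrable_comp_emb e.symm.measurableEmbedding).2 hint
  rw [Measure.volume_eq_prod] at hint2 ⊢
  rw [MeasureTheory.integral_prod_symm _ hint2]
  have hae := hint2.prod_left_ae
  rw [← MeasureTheory.integral_zero (Fin n → ℝ) ℝ (μ := volume)]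
  apply integral_congr_ae
  filter_upwards [hae] with y hy
  -- inner integral is zero by 1D FTC
  have hline : ∀ t : ℝ, HasDerivAt
      (fun s => f (Fin.insertNth (α := fun _ => ℝ) k s y))
      (f' (Fin.insertNth (α := fun _ => ℝ) k t y)) t := by
    intro t
    have h := hd (Fin.insertNth (α := fun _ => ℝ) k t y) t
    have h1 : (fun s => f (Function.update (Fin.insertNth (α := fun _ => ℝ) k t y) k s))
        = fun s => f (Fin.insertNth (α := fun _ => ℝ) k s y) := by
      funext s; rw [update_insertNth]
    have h2 : Function.update (Fin.insertNth (α := fun _ => ℝ) k t y) k t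
        = Fin.insertNth (α := fun _ => ℝ) k t y := update_insertNth k y t t
    rw [h1, h2] at h
    exact h
  have hgint : Integrable (fun t => f' (Fin.insertNth (α := fun _ => ℝ) k t y)) volume := by
    have := hy
    simpa [hsymm] using this
  have htop : Tendsto (fun t => f (Fin.insertNth (α := fun _ => ℝ) k t y)) atTop (nhds 0) :=
    hlim.comp ((tendsto_insertNth_cocompact k y).mono_left _root_.atTop_le_cocompact)
  have hbot : Tendsto (fun t => f (Fin.insertNth (α := fun _ => ℝ) k t y)) atBot (nhds 0) :=
    hlim.comp ((tendsto_insertNth_cocompact k y).mono_left _root_.atBot_le_cocompact)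
  have := integral_deriv_zero_of_tendsto _ _ hline hgint htop hbot
  simpa [hsymm] using this

lemma update_eq_add_smul {d : ℕ} (x : Fin d → ℝ) (k : Fin d) (s : ℝ) :
    Function.update x k s = x + (s - x k) • (Pi.single k 1 : Fin d → ℝ) := by
  funext i
  rcases eq_or_ne i k with rfl | h
  · simp
  · simp [Function.update_of_ne h, Pi.single_apply, h]

lemma hasDerivAt_quadratic_line {d : ℕ} (A : Matrix (Fin d) (Fin d) ℝ) (hA : Aᵀ = A)
    (μ : Fin d → ℝ) (k : Fin d) (x : Fin d → ℝ) :
    HasDerivAt (fun s => -(1/2) * ((Function.update x k s - μ) ⬝ᵥ A.mulVec (Function.update x k s - μ)))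
      (-(A.mulVec (x - μ) k)) (x k) := by
  set u : Fin d → ℝ := x - μ with hu
  set v : Fin d → ℝ := Pi.single k (1:ℝ) with hv
  have hvAu : v ⬝ᵥ A.mulVec u = A.mulVec u k := by
    rw [hv, single_dotProduct, one_mul]
  have huAv : u ⬝ᵥ A.mulVec v = A.mulVec u k := by
    conv_lhs => rw [Matrix.dotProduct_mulVec, ← hA, Matrix.vecMul_transpose]
    rw [hv, dotProduct_single, mul_one]
  have key : (fun s => -(1/2) * ((Function.update x k s - μ) ⬝ᵥ A.mulVec (Function.update x k s - μ)))
      = fun s => -(1/2) * (u ⬝ᵥ A.mulVec u) - (s - x k) * (A.mulVec u k)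
          - (1/2) * ((s - x k)^2 * (v ⬝ᵥ A.mulVec v)) := by
    funext s
    have h1 : Function.update x k s - μ = u + (s - x k) • v := by
      rw [update_eq_add_smul x k s, hu, hv]
      abel
    rw [h1]
    simp only [Matrix.mulVec_add, Matrix.mulVec_smul, add_dotProduct,
      dotProduct_add, smul_dotProduct, dotProduct_smul, smul_eq_mul]
    rw [huAv, hvAu]
    ring
  rw [key]
  have h0 : HasDerivAt (fun s : ℝ => s - x k) 1 (x k) := (hasDerivAt_id _).sub_const _
  have h1 : HasDerivAt (fun s : ℝ => (s - x k) * (A.mulVec u k)) (A.mulVec u k) (x k) := by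
    simpa using h0.mul_const (A.mulVec u k)
  have h2 : HasDerivAt (fun s : ℝ => (s - x k)^2 * (v ⬝ᵥ A.mulVec v)) 0 (x k) := by
    have := (h0.pow 2).mul_const (v ⬝ᵥ A.mulVec v)
    simpa using this
  have h3 := ((hasDerivAt_const (x k) (-(1/2) * (u ⬝ᵥ A.mulVec u))).sub h1).sub (h2.const_mul (1/2))
  exact h3.congr_deriv (by ring)

noncomputable def gaussianPdf (d : ℕ) (μ : Fin d → ℝ) (Γ : Matrix (Fin d) (Fin d) ℝ)
    (x : Fin d → ℝ) : ℝ :=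
  (Real.sqrt ((2 * Real.pi) ^ d * Γ.det))⁻¹ *
    Real.exp (-(1 / 2) * ((x - μ) ⬝ᵥ Γ⁻¹.mulVec (x - μ)))

noncomputable def gradVec {d : ℕ} (f : (Fin d → ℝ) → ℝ) (x : Fin d → ℝ) : Fin d → ℝ :=
  fun i => fderiv ℝ f x (Pi.single i 1)

/-- **Covariance of the damped target.**  With `q = N(μ, Γ)`, `Φ = log π − log q` and
`q_γ ∝ q e^{γΦ}`, the covariance of `q_γ` satisfies
`cov_{q_γ}[X] = Γ + γ cov_{q_γ}[Γ∇Φ(X), X]` (entrywise). -/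
theorem dais_covariance_identity (d : ℕ) (μ : Fin d → ℝ) (Γ : Matrix (Fin d) (Fin d) ℝ)
    (hΓ : Γ.PosDef)
    (ptgt : (Fin d → ℝ) → ℝ) (hπ_pos : ∀ x, 0 < ptgt x) (hπ_smooth : ContDiff ℝ 1 ptgt)
    (hπ_prob : ∫ x, ptgt x = 1)
    (γ : ℝ) (hγ : γ ∈ Set.Ioc (0 : ℝ) 1)
    (q : (Fin d → ℝ) → ℝ) (hq : q = gaussianPdf d μ Γ)
    (Φ : (Fin d → ℝ) → ℝ) (hΦ : Φ = fun x => Real.log (ptgt x) - Real.log (q x))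
    (Z : ℝ) (hZ : Z = ∫ x, q x * Real.exp (γ * Φ x)) (hZ_pos : 0 < Z)
    (qγ : (Fin d → ℝ) → ℝ) (hqγ : qγ = fun x => q x * Real.exp (γ * Φ x) / Z)
    -- means of `X` and of `Γ∇Φ(X)` under `q_γ`
    (m : Fin d → ℝ) (hm : m = ∫ x, qγ x • x)
    (u : Fin d → ℝ) (hu : u = ∫ x, qγ x • Γ.mulVec (gradVec Φ x))
    -- integrability and decay conditions
    (hint_mean : Integrable (fun x => qγ x • x))
    (hint_grad : Integrable (fun x => qγ x • Γ.mulVec (gradVec Φ x)))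
    (hint_cov : ∀ i j, Integrable (fun x => qγ x * ((x i - m i) * (x j - m j))))
    (hint_crosscov : ∀ i j,
      Integrable (fun x => qγ x * ((Γ.mulVec (gradVec Φ x) i - u i) * (x j - m j))))
    (hdecay : Tendsto (fun x => qγ x * ‖x‖ ^ 2) (cocompact (Fin d → ℝ)) (nhds 0)) :
    ∀ i j, (∫ x, qγ x * ((x i - m i) * (x j - m j))) =
      Γ i j + γ * ∫ x, qγ x * ((Γ.mulVec (gradVec Φ x) i - u i) * (x j - m j)) := by
  classical
  intro i j
  have hd0 : d ≠ 0 := fun h => (h ▸ i).elim0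
  obtain ⟨n, rfl⟩ := Nat.exists_eq_succ_of_ne_zero hd0
  -- matrix facts
  have hdet : IsUnit Γ.det := hΓ.det_pos.ne'.isUnit
  have hΓsymm : Γᵀ = Γ := by
    have h := hΓ.1
    ext a b
    have h2 := congrFun (congrFun h a) b
    simpa using h2
  set A : Matrix (Fin (n+1)) (Fin (n+1)) ℝ := Γ⁻¹ with hAdef
  have hAsymm : Aᵀ = A := by
    rw [hAdef, Matrix.transpose_nonsing_inv, hΓsymm]
  have hAΓ : A * Γ = 1 := Matrix.nonsing_inv_mul Γ hdet
  have hΓA : Γ * A = 1 := Matrix.mul_nonsing_inv Γ hdet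
  set c : ℝ := Real.sqrt ((2 * Real.pi) ^ (n+1) * Γ.det) with hc
  set B : (Fin (n+1) → ℝ) → ℝ := fun y => -(1/2) * ((y - μ) ⬝ᵥ A.mulVec (y - μ)) with hBdef
  have hq' : ∀ y, q y = c⁻¹ * Real.exp (B y) := by
    intro y
    rw [hq]
    simp only [gaussianPdf, hBdef, hAdef, hc]
  have hρ_eq : ∀ y, qγ y = c⁻¹ * Real.exp (B y + γ * Φ y) / Z := by
    intro y
    simp only [hqγ]
    rw [hq' y, Real.exp_add]
    ring
  have hcpos : (0:ℝ) < c := by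
    rw [hc]
    apply Real.sqrt_pos.2
    have := hΓ.det_pos
    positivity
  have hqpos : ∀ y, 0 < q y := by
    intro y
    rw [hq' y]
    positivity
  have hρ_nonneg : ∀ y, 0 ≤ qγ y := by
    intro y
    rw [hρ_eq y]
    apply div_nonneg _ hZ_pos.le
    positivity
  -- differentiability
  have hcoorddiff : ∀ ii : Fin (n+1), Differentiable ℝ (fun y : Fin (n+1) → ℝ => y ii) :=
    fun ii => (ContinuousLinearMap.proj (R := ℝ) (φ := fun _ : Fin (n+1) => ℝ) ii).differentiable
  have hBdiff : Differentiable ℝ B := by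
    rw [hBdef]
    simp only [dotProduct, Matrix.mulVec, Pi.sub_apply]
    apply Differentiable.const_mul
    apply Differentiable.fun_sum
    intro ii _
    exact ((hcoorddiff ii).sub_const (μ ii)).mul
      (Differentiable.fun_sum fun l _ => ((hcoorddiff l).sub_const (μ l)).const_mul (A ii l))
  have hqdiff : Differentiable ℝ q := by
    have hqfun : q = fun y => c⁻¹ * Real.exp (B y) := funext hq'
    rw [hqfun]
    exact (hBdiff.exp).const_mul _
  have hΦdiff : Differentiable ℝ Φ := by
    rw [hΦ]
    intro y
    exact ((hπ_smooth.differentiable one_ne_zero y).log (hπ_pos y).ne').sub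
      ((hqdiff y).log (hqpos y).ne')
  -- basic integrability
  have hZint : Integrable (fun x => q x * Real.exp (γ * Φ x)) := by
    by_contra h
    rw [MeasureTheory.integral_undef h] at hZ
    exact hZ_pos.ne' hZ
  have hρint : Integrable qγ := by
    rw [hqγ]
    simpa [div_eq_mul_inv] using hZint.mul_const Z⁻¹
  have hρone : ∫ x, qγ x = 1 := by
    simp only [hqγ, div_eq_mul_inv]
    rw [MeasureTheory.integral_mul_const, ← hZ, mul_inv_cancel₀ hZ_pos.ne']
  -- coordinate means
  have hmean_int : ∀ jj, Integrable (fun x => qγ x * x jj) := by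
    intro jj
    have h := (ContinuousLinearMap.proj (R := ℝ) (φ := fun _ : Fin (n+1) => ℝ) jj).integrable_comp
      hint_mean
    simpa [smul_eq_mul] using h
  have hm_eq : ∀ jj, m jj = ∫ x, qγ x * x jj := by
    intro jj
    have h := ContinuousLinearMap.integral_comp_comm
      (ContinuousLinearMap.proj (R := ℝ) (φ := fun _ : Fin (n+1) => ℝ) jj) hint_mean
    simp only [ContinuousLinearMap.proj_apply, Pi.smul_apply, smul_eq_mul] at h
    rw [hm]
    exact h.symm
  have hgrad_int : ∀ ii, Integrable (fun x => qγ x * Γ.mulVec (gradVec Φ x) ii) := by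
    intro ii
    have h := (ContinuousLinearMap.proj (R := ℝ) (φ := fun _ : Fin (n+1) => ℝ) ii).integrable_comp
      hint_grad
    simpa [smul_eq_mul] using h
  have hu_eq : ∀ ii, u ii = ∫ x, qγ x * Γ.mulVec (gradVec Φ x) ii := by
    intro ii
    have h := ContinuousLinearMap.integral_comp_comm
      (ContinuousLinearMap.proj (R := ℝ) (φ := fun _ : Fin (n+1) => ℝ) ii) hint_grad
    simp only [ContinuousLinearMap.proj_apply, Pi.smul_apply, smul_eq_mul] at h
    rw [hu]
    exact h.symm
  have hI3 : ∀ jj, Integrable (fun x => qγ x * (x jj - m jj)) := by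
    intro jj
    have h := (hmean_int jj).sub (hρint.mul_const (m jj))
    simp only [mul_sub]; exact h
  have hImean0 : ∀ jj, ∫ x, qγ x * (x jj - m jj) = 0 := by
    intro jj
    simp_rw [mul_sub]
    rw [MeasureTheory.integral_sub (hmean_int jj) (hρint.mul_const _),
      MeasureTheory.integral_mul_const, hρone, one_mul, ← hm_eq jj, sub_self]
  have hI5 : ∀ ii, Integrable (fun x => qγ x * (Γ.mulVec (gradVec Φ x) ii * (x j - m j))) := by
    intro ii
    have h := (hint_crosscov ii j).add ((hI3 j).const_mul (u ii))
    refine h.congr (ae_of_all _ fun x => ?_)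
    simp only [Pi.add_apply]
    ring
  have hI6 : ∀ ii, Integrable (fun x => qγ x * ((x ii - μ ii) * (x j - m j))) := by
    intro ii
    have h := (hint_cov ii j).add ((hI3 j).const_mul (m ii - μ ii))
    refine h.congr (ae_of_all _ fun x => ?_)
    simp only [Pi.add_apply]
    ring
  have hgw : ∀ (x : Fin (n+1) → ℝ) (kk : Fin (n+1)),
      gradVec Φ x kk = ∑ ii, A kk ii * Γ.mulVec (gradVec Φ x) ii := by
    intro x kk
    have h : A.mulVec (Γ.mulVec (gradVec Φ x)) = gradVec Φ x := by
      rw [Matrix.mulVec_mulVec, hAΓ, Matrix.one_mulVec]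
    conv_lhs => rw [← h]
    simp [Matrix.mulVec, dotProduct]
  have hI2' : ∀ kk, Integrable (fun x => qγ x * (gradVec Φ x kk * (x j - m j))) := by
    intro kk
    have heq : (fun x => qγ x * (gradVec Φ x kk * (x j - m j)))
        = fun x => ∑ ii, A kk ii * (qγ x * (Γ.mulVec (gradVec Φ x) ii * (x j - m j))) := by
      funext x
      rw [hgw x kk, Finset.sum_mul, Finset.mul_sum]
      exact Finset.sum_congr rfl fun ii _ => by ring
    rw [heq]
    exact MeasureTheory.integrable_finset_sum _ fun ii _ => (hI5 ii).const_mul _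
  have hxμ_sum : ∀ (x : Fin (n+1) → ℝ) (kk : Fin (n+1)),
      A.mulVec (x - μ) kk = ∑ ii, A kk ii * (x ii - μ ii) := by
    intro x kk
    simp [Matrix.mulVec, dotProduct]
  have hI1' : ∀ kk, Integrable (fun x => qγ x * (A.mulVec (x - μ) kk * (x j - m j))) := by
    intro kk
    have heq : (fun x => qγ x * (A.mulVec (x - μ) kk * (x j - m j)))
        = fun x => ∑ ii, A kk ii * (qγ x * ((x ii - μ ii) * (x j - m j))) := by
      funext x
      rw [hxμ_sum x kk, Finset.sum_mul, Finset.mul_sum]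
      exact Finset.sum_congr rfl fun ii _ => by ring
    rw [heq]
    exact MeasureTheory.integrable_finset_sum _ fun ii _ => (hI6 ii).const_mul _
  -- the functions for Stein's identity
  set F : (Fin (n+1) → ℝ) → ℝ := fun x => qγ x * (x j - m j) with hFdef
  set G : Fin (n+1) → (Fin (n+1) → ℝ) → ℝ := fun kk x =>
    qγ x * ((-(A.mulVec (x - μ) kk) + γ * gradVec Φ x kk) * (x j - m j)
      + (if kk = j then (1:ℝ) else 0)) with hGdef
  have hGeq : ∀ kk, G kk = fun x =>
      (-(qγ x * (A.mulVec (x - μ) kk * (x j - m j)))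
        + γ * (qγ x * (gradVec Φ x kk * (x j - m j))))
        + qγ x * (if kk = j then (1:ℝ) else 0) := by
    intro kk
    funext x
    simp only [hGdef]
    ring
  have hGint : ∀ kk, Integrable (G kk) := by
    intro kk
    rw [hGeq kk]
    exact ((hI1' kk).neg.add ((hI2' kk).const_mul γ)).add (hρint.mul_const _)
  -- decay of F
  have hFlim : Tendsto F (cocompact (Fin (n+1) → ℝ)) (nhds 0) := by
    apply squeeze_zero_norm' (a := fun x => (1 + |m j|) * (qγ x * ‖x‖^2))
    · have hev : ∀ᶠ x : Fin (n+1) → ℝ in cocompact _, 1 ≤ ‖x‖ := by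
        rw [hasBasis_cocompact.eventually_iff]
        refine ⟨Metric.closedBall 0 1, isCompact_closedBall _ _, fun x hx => ?_⟩
        simp only [Set.mem_compl_iff, Metric.mem_closedBall, dist_zero_right, not_le] at hx
        exact hx.le
      filter_upwards [hev] with x hx
      have h1 : |x j - m j| ≤ ‖x‖ + |m j| := by
        have h2 : |x j| ≤ ‖x‖ := by
          have := norm_le_pi_norm x j
          simpa using this
        calc |x j - m j| ≤ |x j| + |m j| := by
              rw [sub_eq_add_neg]
              exact (abs_add_le _ _).trans (by rw [abs_neg])
          _ ≤ ‖x‖ + |m j| := by linarith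
      have hb : |x j - m j| ≤ (1 + |m j|) * ‖x‖^2 := by
        have h2 : ‖x‖ ≤ ‖x‖^2 := by nlinarith
        have h3 : |m j| ≤ |m j| * ‖x‖^2 := le_mul_of_one_le_right (abs_nonneg _) (by nlinarith)
        calc |x j - m j| ≤ ‖x‖ + |m j| := h1
          _ ≤ ‖x‖^2 + |m j| * ‖x‖^2 := add_le_add h2 h3
          _ = (1 + |m j|) * ‖x‖^2 := by ring
      calc ‖F x‖ = qγ x * |x j - m j| := by
            simp only [hFdef, Real.norm_eq_abs, abs_mul, abs_of_nonneg (hρ_nonneg x)]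
        _ ≤ qγ x * ((1 + |m j|) * ‖x‖^2) := mul_le_mul_of_nonneg_left hb (hρ_nonneg x)
        _ = (1 + |m j|) * (qγ x * ‖x‖^2) := by ring
    · simpa using hdecay.const_mul (1 + |m j|)
  -- the pointwise derivative claim
  have claim : ∀ (kk : Fin (n+1)) (x : Fin (n+1) → ℝ),
      HasDerivAt (fun s => F (Function.update x kk s)) (G kk x) (x kk) := by
    intro kk x
    have hupd : Function.update x kk (x kk) = x := Function.update_eq_self kk x
    have hBline : HasDerivAt (fun s => B (Function.update x kk s))
        (-(A.mulVec (x - μ) kk)) (x kk) := by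
      simp only [hBdef]
      exact hasDerivAt_quadratic_line A hAsymm μ kk x
    have hφline : HasDerivAt (fun s => Φ (Function.update x kk s)) (gradVec Φ x kk) (x kk) := by
      have h := (hΦdiff (Function.update x kk (x kk))).hasFDerivAt.comp_hasDerivAt (x kk)
        (hasDerivAt_update x kk (x kk))
      rw [hupd] at h
      exact h
    have hsum : HasDerivAt
        (fun s => B (Function.update x kk s) + γ * Φ (Function.update x kk s))
        (-(A.mulVec (x - μ) kk) + γ * gradVec Φ x kk) (x kk) := hBline.add (hφline.const_mul γ)
    have hexp := hsum.exp
    rw [hupd] at hexp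
    have hρline := (hexp.const_mul c⁻¹).div_const Z
    have hcoordline : HasDerivAt (fun s => Function.update x kk s j - m j)
        (if kk = j then (1:ℝ) else 0) (x kk) := by
      rcases eq_or_ne kk j with rfl | hne
      · simp only [Function.update_self, if_pos rfl]
        exact (hasDerivAt_id _).sub_const _
      · simp only [Function.update_of_ne (Ne.symm hne), if_neg hne]
        exact hasDerivAt_const _ _
    have hFeq : (fun s => F (Function.update x kk s))
        = fun s => (c⁻¹ * Real.exp (B (Function.update x kk s)
            + γ * Φ (Function.update x kk s)) / Z)
          * (Function.update x kk s j - m j) := by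
      funext s
      simp only [hFdef]
      rw [hρ_eq]
    rw [hFeq]
    have h := hρline.mul hcoordline
    rw [hupd] at h
    refine h.congr_deriv ?_
    simp only [hGdef, hρ_eq]
    ring
  -- Stein's identity for each coordinate
  have hstein : ∀ kk, ∫ x, G kk x = 0 := by
    intro kk
    apply integral_pderiv_eq_zero kk F (G kk) ?_ (hGint kk) hFlim
    intro y t
    have h := claim kk (Function.update y kk t)
    have h1 : (fun s => F (Function.update (Function.update y kk t) kk s))
        = fun s => F (Function.update y kk s) := by
      funext s
      rw [Function.update_idem]
    rw [h1, Function.update_self] at h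
    exact h
  have hsplit : ∀ kk, ∫ x, qγ x * (A.mulVec (x - μ) kk * (x j - m j))
      = γ * (∫ x, qγ x * (gradVec Φ x kk * (x j - m j)))
        + (if kk = j then (1:ℝ) else 0) := by
    intro kk
    have h0 := hstein kk
    rw [hGeq kk] at h0
    have hna : Integrable (fun x => -(qγ x * (A.mulVec (x - μ) kk * (x j - m j)))) volume :=
      (hI1' kk).neg
    have hca : Integrable (fun x => γ * (qγ x * (gradVec Φ x kk * (x j - m j)))) volume :=
      (hI2' kk).const_mul γ
    have ha : Integrable (fun x => -(qγ x * (A.mulVec (x - μ) kk * (x j - m j)))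
        + γ * (qγ x * (gradVec Φ x kk * (x j - m j)))) volume := hna.add hca
    have hb : Integrable (fun x => qγ x * (if kk = j then (1:ℝ) else 0)) volume :=
      hρint.mul_const _
    rw [MeasureTheory.integral_add ha hb,
      MeasureTheory.integral_add hna hca,
      MeasureTheory.integral_neg, MeasureTheory.integral_const_mul,
      MeasureTheory.integral_mul_const, hρone, one_mul] at h0
    linarith [h0]
  -- putting it together
  have hxsum : ∀ x : Fin (n+1) → ℝ, x i - μ i = ∑ kk, Γ i kk * A.mulVec (x - μ) kk := by
    intro x
    have h : Γ.mulVec (A.mulVec (x - μ)) = x - μ := by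
      rw [Matrix.mulVec_mulVec, hΓA, Matrix.one_mulVec]
    have h2 := congrFun h i
    calc x i - μ i = (x - μ) i := (Pi.sub_apply x μ i).symm
      _ = Γ.mulVec (A.mulVec (x - μ)) i := h2.symm
      _ = ∑ kk, Γ i kk * A.mulVec (x - μ) kk := by simp [Matrix.mulVec, dotProduct]
  have hT1 : ∫ x, qγ x * ((x i - m i) * (x j - m j))
      = ∫ x, qγ x * ((x i - μ i) * (x j - m j)) := by
    have heq : (fun x => qγ x * ((x i - m i) * (x j - m j)))
        = fun x => qγ x * ((x i - μ i) * (x j - m j)) + (μ i - m i) * (qγ x * (x j - m j)) := by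
      funext x
      ring
    rw [heq, MeasureTheory.integral_add (hI6 i) ((hI3 j).const_mul _),
      MeasureTheory.integral_const_mul, hImean0 j, mul_zero, add_zero]
  have hT2 : ∫ x, qγ x * ((x i - μ i) * (x j - m j))
      = ∑ kk, Γ i kk * ∫ x, qγ x * (A.mulVec (x - μ) kk * (x j - m j)) := by
    have heq : (fun x => qγ x * ((x i - μ i) * (x j - m j)))
        = fun x => ∑ kk, Γ i kk * (qγ x * (A.mulVec (x - μ) kk * (x j - m j))) := by
      funext x
      rw [hxsum x, Finset.sum_mul, Finset.mul_sum]
      exact Finset.sum_congr rfl fun kk _ => by ring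
    rw [heq, MeasureTheory.integral_finset_sum _ fun kk _ => (hI1' kk).const_mul _]
    exact Finset.sum_congr rfl fun kk _ => MeasureTheory.integral_const_mul _ _
  have hT3 : ∑ kk, Γ i kk * ∫ x, qγ x * (A.mulVec (x - μ) kk * (x j - m j))
      = γ * (∑ kk, Γ i kk * ∫ x, qγ x * (gradVec Φ x kk * (x j - m j))) + Γ i j := by
    calc ∑ kk, Γ i kk * ∫ x, qγ x * (A.mulVec (x - μ) kk * (x j - m j))
        = ∑ kk, (γ * (Γ i kk * ∫ x, qγ x * (gradVec Φ x kk * (x j - m j)))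
            + Γ i kk * (if kk = j then (1:ℝ) else 0)) := by
          refine Finset.sum_congr rfl fun kk _ => ?_
          rw [hsplit kk]
          ring
      _ = γ * (∑ kk, Γ i kk * ∫ x, qγ x * (gradVec Φ x kk * (x j - m j))) + Γ i j := by
          rw [Finset.sum_add_distrib, ← Finset.mul_sum]
          congr 1
          simp [Finset.sum_ite_eq', mul_ite, mul_one, mul_zero]
  have hT4 : ∑ kk, Γ i kk * ∫ x, qγ x * (gradVec Φ x kk * (x j - m j))
      = ∫ x, qγ x * (Γ.mulVec (gradVec Φ x) i * (x j - m j)) := by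
    have heq : (fun x => qγ x * (Γ.mulVec (gradVec Φ x) i * (x j - m j)))
        = fun x => ∑ kk, Γ i kk * (qγ x * (gradVec Φ x kk * (x j - m j))) := by
      funext x
      rw [show Γ.mulVec (gradVec Φ x) i = ∑ kk, Γ i kk * gradVec Φ x kk from by
        simp [Matrix.mulVec, dotProduct], Finset.sum_mul, Finset.mul_sum]
      exact Finset.sum_congr rfl fun kk _ => by ring
    rw [heq, MeasureTheory.integral_finset_sum _ fun kk _ => (hI2' kk).const_mul _]
    exact Finset.sum_congr rfl fun kk _ => (MeasureTheory.integral_const_mul _ _).symm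
  have hT5 : ∫ x, qγ x * ((Γ.mulVec (gradVec Φ x) i - u i) * (x j - m j))
      = ∫ x, qγ x * (Γ.mulVec (gradVec Φ x) i * (x j - m j)) := by
    have heq : (fun x => qγ x * ((Γ.mulVec (gradVec Φ x) i - u i) * (x j - m j)))
        = fun x => qγ x * (Γ.mulVec (gradVec Φ x) i * (x j - m j))
          - u i * (qγ x * (x j - m j)) := by
      funext x
      ring
    rw [heq, MeasureTheory.integral_sub (hI5 i) ((hI3 j).const_mul _),
      MeasureTheory.integral_const_mul, hImean0 j, mul_zero, sub_zero]
  rw [hT1, hT2, hT3, hT4, hT5]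
  ring
end

section
/- Given real numbers Φ_1, …, Φ_S (not all equal), define for γ > 0 the weights w_s(γ) = exp(γ Φ_s) and the effective sample size ESS(γ) = (Σ_s w_s(γ))² / Σ_s w_s(γ)². Then γ ↦ ESS(γ) is continuous and strictly decreasing on (0, ∞). -/
open Real

private lemma key_sign {x y : ℝ} (hx : 0 < x) (hxy : x < y) (u v : ℝ) :
    0 ≤ (exp (x*v+2*x*u) - exp (x*u+2*x*v)) *
        (exp ((2*y-2*x)*u) - exp ((2*y-2*x)*v)) := by
  rcases le_total u v with h | h
  · have h1 : exp (x*v+2*x*u) ≤ exp (x*u+2*x*v) := by rw [Real.exp_le_exp]; nlinarith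
    have h2 : exp ((2*y-2*x)*u) ≤ exp ((2*y-2*x)*v) := by rw [Real.exp_le_exp]; nlinarith
    nlinarith [mul_nonneg (sub_nonneg.2 h1) (sub_nonneg.2 h2)]
  · apply mul_nonneg <;>
      · rw [sub_nonneg, Real.exp_le_exp]; nlinarith

private lemma key_sign' {x y : ℝ} (hx : 0 < x) (hxy : x < y) {u v : ℝ} (huv : u ≠ v) :
    0 < (exp (x*v+2*x*u) - exp (x*u+2*x*v)) *
        (exp ((2*y-2*x)*u) - exp ((2*y-2*x)*v)) := by
  rcases lt_or_gt_of_ne huv with h | h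
  · have h1 : exp (x*v+2*x*u) < exp (x*u+2*x*v) := by rw [Real.exp_lt_exp]; nlinarith
    have h2 : exp ((2*y-2*x)*u) < exp ((2*y-2*x)*v) := by rw [Real.exp_lt_exp]; nlinarith
    nlinarith [mul_pos (sub_pos.2 h1) (sub_pos.2 h2)]
  · apply mul_pos <;>
      · rw [sub_pos, Real.exp_lt_exp]; nlinarith

private lemma key_pt {x y : ℝ} (hx : 0 < x) (hxy : x < y) (u v : ℝ) :
    exp ((2*y-x)*u+2*x*v) + exp ((2*y-x)*v+2*x*u)
      ≤ exp (x*u+2*y*v) + exp (x*v+2*y*u) := by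
  have h := key_sign hx hxy u v
  rw [show (2*y-x)*u+2*x*v = (x*u+2*x*v) + ((2*y-2*x)*u) by ring,
      show (2*y-x)*v+2*x*u = (x*v+2*x*u) + ((2*y-2*x)*v) by ring,
      show x*u+2*y*v = (x*u+2*x*v) + ((2*y-2*x)*v) by ring,
      show x*v+2*y*u = (x*v+2*x*u) + ((2*y-2*x)*u) by ring,
      ]
  simp only [Real.exp_add] at h ⊢
  nlinarith [h]

private lemma key_pt' {x y : ℝ} (hx : 0 < x) (hxy : x < y) {u v : ℝ} (huv : u ≠ v) :
    exp ((2*y-x)*u+2*x*v) + exp ((2*y-x)*v+2*x*u)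
      < exp (x*u+2*y*v) + exp (x*v+2*y*u) := by
  have h := key_sign' hx hxy huv
  rw [show (2*y-x)*u+2*x*v = (x*u+2*x*v) + ((2*y-2*x)*u) by ring,
      show (2*y-x)*v+2*x*u = (x*v+2*x*u) + ((2*y-2*x)*v) by ring,
      show x*u+2*y*v = (x*u+2*x*v) + ((2*y-2*x)*v) by ring,
      show x*v+2*y*u = (x*v+2*x*u) + ((2*y-2*x)*u) by ring,
      ]
  simp only [Real.exp_add] at h ⊢
  nlinarith [h]

/-- **ESS is continuous and strictly decreasing.**  For fixed `Φ_1, …, Φ_S`, not all equal,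
`γ ↦ ESS(γ) = (Σ_s e^{γΦ_s})² / Σ_s e^{2γΦ_s}` is continuous and strictly decreasing on
`(0, ∞)`. -/
theorem ess_continuous_strictAnti (S : ℕ) (Φ : Fin S → ℝ)
    (hne : ¬ ∀ s t, Φ s = Φ t)
    (ESS : ℝ → ℝ)
    (hESS : ESS = fun γ =>
      (∑ s, Real.exp (γ * Φ s)) ^ 2 / ∑ s, Real.exp (γ * Φ s) ^ 2) :
    ContinuousOn ESS (Set.Ioi 0) ∧ StrictAntiOn ESS (Set.Ioi 0) := by
  push_neg at hne
  obtain ⟨s₀, t₀, hst⟩ := hne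
  -- helper: sums of exponentials are positive
  have hpos : ∀ γ : ℝ, 0 < ∑ s, exp (γ * Φ s) := fun γ =>
    Finset.sum_pos (fun s _ => Real.exp_pos _) ⟨s₀, Finset.mem_univ _⟩
  have hsqpos : ∀ γ : ℝ, 0 < ∑ s, exp (γ * Φ s) ^ 2 := fun γ =>
    Finset.sum_pos (fun s _ => by positivity) ⟨s₀, Finset.mem_univ _⟩
  constructor
  · -- continuity
    rw [hESS]
    apply Continuous.continuousOn
    apply Continuous.div
    · exact (continuous_finset_sum _ fun s _ =>
        (Real.continuous_exp.comp (continuous_id.mul continuous_const))).pow 2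
    · exact continuous_finset_sum _ fun s _ =>
        ((Real.continuous_exp.comp (continuous_id.mul continuous_const)).pow 2)
    · exact fun γ => (hsqpos γ).ne'
  · -- strict antitonicity
    intro x hx y hy hxy
    rw [hESS]
    simp only [Set.mem_Ioi] at hx hy
    -- rewrite exp squared
    have hsq : ∀ γ : ℝ, ∑ s, exp (γ * Φ s) ^ 2 = ∑ s, exp (2 * γ * Φ s) := by
      intro γ; apply Finset.sum_congr rfl; intro s _
      rw [sq, ← Real.exp_add]; ring_nf
    simp only [hsq]
    rw [div_lt_div_iff₀ (Finset.sum_pos (fun s _ => Real.exp_pos _) ⟨s₀, Finset.mem_univ _⟩)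
        (Finset.sum_pos (fun s _ => Real.exp_pos _) ⟨s₀, Finset.mem_univ _⟩)]
    -- Cauchy–Schwarz step
    have cs : (∑ s, exp (y * Φ s)) ^ 2
        ≤ (∑ s, exp (x * Φ s)) * (∑ s, exp ((2*y-x) * Φ s)) := by
      have h := Finset.sum_mul_sq_le_sq_mul_sq Finset.univ
        (fun s => exp ((x/2) * Φ s)) (fun s => exp ((y - x/2) * Φ s))
      have e1 : ∀ s : Fin S, exp ((x/2) * Φ s) * exp ((y - x/2) * Φ s) = exp (y * Φ s) := by
        intro s; rw [← Real.exp_add]; ring_nf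
      have e2 : ∀ s : Fin S, exp ((x/2) * Φ s) ^ 2 = exp (x * Φ s) := by
        intro s; rw [sq, ← Real.exp_add]; ring_nf
      have e3 : ∀ s : Fin S, exp ((y - x/2) * Φ s) ^ 2 = exp ((2*y-x) * Φ s) := by
        intro s; rw [sq, ← Real.exp_add]; ring_nf
      simpa only [e1, e2, e3] using h
    -- Chebyshev-type strict step
    have cheb : (∑ s, exp ((2*y-x) * Φ s)) * (∑ s, exp (2 * x * Φ s))
        < (∑ s, exp (x * Φ s)) * (∑ s, exp (2 * y * Φ s)) := by
      have hP : (∑ s, exp ((2*y-x) * Φ s)) * (∑ s, exp (2 * x * Φ s))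
          = ∑ p : Fin S × Fin S, exp ((2*y-x) * Φ p.1 + 2*x * Φ p.2) := by
        rw [Finset.sum_mul_sum, Fintype.sum_prod_type]
        exact Finset.sum_congr rfl fun s _ => Finset.sum_congr rfl fun r _ =>
          (Real.exp_add _ _).symm
      have hQ : (∑ s, exp (x * Φ s)) * (∑ s, exp (2 * y * Φ s))
          = ∑ p : Fin S × Fin S, exp (x * Φ p.1 + 2*y * Φ p.2) := by
        rw [Finset.sum_mul_sum, Fintype.sum_prod_type]
        exact Finset.sum_congr rfl fun s _ => Finset.sum_congr rfl fun r _ =>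
          (Real.exp_add _ _).symm
      rw [hP, hQ]
      have hsymm : ∀ f : Fin S × Fin S → ℝ,
          ∑ p : Fin S × Fin S, f p = ∑ p : Fin S × Fin S, f (p.2, p.1) := by
        intro f
        rw [Fintype.sum_prod_type, Fintype.sum_prod_type]
        exact Finset.sum_comm
      have key : ∑ p : Fin S × Fin S,
            (exp ((2*y-x) * Φ p.1 + 2*x * Φ p.2) + exp ((2*y-x) * Φ p.2 + 2*x * Φ p.1))
          < ∑ p : Fin S × Fin S,
            (exp (x * Φ p.1 + 2*y * Φ p.2) + exp (x * Φ p.2 + 2*y * Φ p.1)) := by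
        apply Finset.sum_lt_sum
        · intro p _
          have := key_pt hx hxy (Φ p.1) (Φ p.2)
          linarith [this]
        · refine ⟨(s₀, t₀), Finset.mem_univ _, ?_⟩
          have := key_pt' hx hxy hst
          linarith [this]
      have eP := hsymm (fun p => exp ((2*y-x) * Φ p.1 + 2*x * Φ p.2))
      have eQ := hsymm (fun p => exp (x * Φ p.1 + 2*y * Φ p.2))
      rw [Finset.sum_add_distrib, Finset.sum_add_distrib] at key
      simp only at eP eQ
      linarith [key, eP, eQ]
    calc (∑ s, exp (y * Φ s)) ^ 2 * ∑ s, exp (2 * x * Φ s)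
        ≤ ((∑ s, exp (x * Φ s)) * (∑ s, exp ((2*y-x) * Φ s))) * ∑ s, exp (2 * x * Φ s) := by
          apply mul_le_mul_of_nonneg_right cs (le_of_lt (by
            exact Finset.sum_pos (fun s _ => Real.exp_pos _) ⟨s₀, Finset.mem_univ _⟩))
      _ < (∑ s, exp (x * Φ s)) ^ 2 * ∑ s, exp (2 * y * Φ s) := by
          have h := mul_lt_mul_of_pos_left cheb (hpos x)
          calc ((∑ s, exp (x * Φ s)) * (∑ s, exp ((2*y-x) * Φ s))) * ∑ s, exp (2 * x * Φ s)
              = (∑ s, exp (x * Φ s)) * ((∑ s, exp ((2*y-x) * Φ s)) * ∑ s, exp (2 * x * Φ s)) := by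
                ring
            _ < (∑ s, exp (x * Φ s)) * ((∑ s, exp (x * Φ s)) * ∑ s, exp (2 * y * Φ s)) := h
            _ = (∑ s, exp (x * Φ s)) ^ 2 * ∑ s, exp (2 * y * Φ s) := by ring
end

section
/- Let {q_λ : λ ∈ Λ} be a natural exponential family with q_λ(x) = exp(⟨λ, T(x)⟩)/Z(λ), and let π be a fixed density. Fix α ∈ (0,1) and define q_{λ,α}(x) ∝ q_λ(x)^{1−α} π(x)^α. Then λ is a stationary point of the map λ ↦ D_α(π ‖ q_λ) (the α-divergence) if and only if E_{q_λ}[T(X)] = E_{q_{λ,α}}[T(X)], under suitable differentiability and integrability conditions. -/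
open MeasureTheory Real Filter Matrix

lemma aux_exp_bound {a t δ : ℝ} (hδ : 0 < δ) (ht : |t| ≤ δ / 2) :
    |a| * Real.exp (t * a) ≤ (2/δ) * (Real.exp (δ*a) + Real.exp (-(δ*a)) + 2) := by
  have h1 : |a| ≤ (2/δ) * Real.exp ((δ/2) * |a|) := by
    have h := Real.add_one_le_exp ((δ/2) * |a|)
    have h2 := mul_le_mul_of_nonneg_left h (by positivity : (0:ℝ) ≤ 2/δ)
    have h3 : (2/δ) * ((δ/2)*|a| + 1) = |a| + 2/δ := by field_simp
    nlinarith [div_pos (by norm_num : (0:ℝ)<2) hδ]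
  have h2 : Real.exp ((δ/2) * |a|) * Real.exp (t*a)
      ≤ Real.exp (δ*a) + Real.exp (-(δ*a)) + 2 := by
    rw [← Real.exp_add]
    rcases abs_cases a with ⟨h, _⟩ | ⟨h, _⟩
    · rw [h]
      rcases le_or_gt a 0 with ha | ha
      · have : (δ/2)*a + t*a ≤ -(δ*a) := by nlinarith [abs_le.1 ht]
        have := Real.exp_le_exp.2 this
        nlinarith [Real.exp_pos (δ*a), Real.exp_pos ((δ/2)*a + t*a)]
      · have : (δ/2)*a + t*a ≤ δ*a := by nlinarith [abs_le.1 ht]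
        have := Real.exp_le_exp.2 this
        nlinarith [Real.exp_pos (-(δ*a)), Real.exp_pos ((δ/2)*a + t*a)]
    · rw [h]
      rcases le_or_gt a 0 with ha | ha
      · have : (-a)*(δ/2) + t*a ≤ -(δ*a) := by nlinarith [abs_le.1 ht]
        have := Real.exp_le_exp.2 this
        have e : (δ/2)*(-a) + t*a = (-a)*(δ/2) + t*a := by ring
        rw [e]
        nlinarith [Real.exp_pos (δ*a), Real.exp_pos ((-a)*(δ/2) + t*a)]
      · have : (δ/2)*(-a) + t*a ≤ δ*a := by nlinarith [abs_le.1 ht]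
        have := Real.exp_le_exp.2 this
        nlinarith [Real.exp_pos (-(δ*a)), Real.exp_pos ((δ/2)*(-a) + t*a)]
  calc |a| * Real.exp (t*a) ≤ ((2/δ) * Real.exp ((δ/2)*|a|)) * Real.exp (t*a) :=
        mul_le_mul_of_nonneg_right h1 (Real.exp_pos _).le
    _ = (2/δ) * (Real.exp ((δ/2)*|a|) * Real.exp (t*a)) := by ring
    _ ≤ (2/δ) * (Real.exp (δ*a) + Real.exp (-(δ*a)) + 2) :=
        mul_le_mul_of_nonneg_left h2 (by positivity)

lemma aux_laplace_deriv {X : Type*} [MeasurableSpace X] (ν : Measure X)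
    {w s a : X → ℝ} (hw : AEStronglyMeasurable w ν) (hw0 : ∀ x, 0 ≤ w x)
    (hs : Measurable s) (ha : Measurable a) {δ : ℝ} (hδ : 0 < δ)
    (hp : Integrable (fun x => w x * Real.exp (s x + δ * a x)) ν)
    (hm : Integrable (fun x => w x * Real.exp (s x - δ * a x)) ν)
    (h0 : Integrable (fun x => w x * Real.exp (s x)) ν) :
    Integrable (fun x => w x * (a x * Real.exp (s x))) ν ∧
    HasDerivAt (fun t => ∫ x, w x * Real.exp (s x + t * a x) ∂ν)
      (∫ x, w x * (a x * Real.exp (s x)) ∂ν) 0 := by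
  have key := hasDerivAt_integral_of_dominated_loc_of_deriv_le
    (μ := ν) (F := fun t x => w x * Real.exp (s x + t * a x))
    (F' := fun t x => w x * (a x * Real.exp (s x + t * a x)))
    (x₀ := (0:ℝ))
    (bound := fun x => (2/δ) * (w x * Real.exp (s x + δ * a x)
      + w x * Real.exp (s x - δ * a x) + 2 * (w x * Real.exp (s x))))
    (Metric.ball_mem_nhds (0:ℝ) (half_pos hδ))
    (Eventually.of_forall fun t =>
      hw.mul ((hs.add ((measurable_const.mul ha))).exp.aestronglyMeasurable))
    (by simpa using h0)
    (hw.mul ((ha.mul (hs.add (measurable_const.mul ha)).exp).aestronglyMeasurable))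
    (Eventually.of_forall fun x => by
      intro t ht
      have hb := aux_exp_bound (a := a x) hδ (le_of_lt (by simpa [Real.norm_eq_abs] using ht))
      have : |w x * (a x * Real.exp (s x + t * a x))|
          = w x * (|a x| * Real.exp (t * a x)) * Real.exp (s x) := by
        rw [abs_mul, abs_mul, abs_of_nonneg (hw0 x), abs_of_nonneg (Real.exp_pos _).le,
          Real.exp_add]
        ring
      rw [Real.norm_eq_abs, this]
      have h2 : w x * (|a x| * Real.exp (t * a x)) * Real.exp (s x)
          ≤ w x * ((2/δ) * (Real.exp (δ*a x) + Real.exp (-(δ*a x)) + 2)) * Real.exp (s x) := by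
        have := mul_le_mul_of_nonneg_left hb (hw0 x)
        exact mul_le_mul_of_nonneg_right this (Real.exp_pos _).le
      refine h2.trans (le_of_eq ?_)
      simp only [Real.exp_add, Real.exp_sub, Real.exp_neg]
      field_simp)
    (((hp.add hm).add (h0.const_mul 2)).const_mul (2/δ))
    (Eventually.of_forall fun x => by
      intro t _
      have h1 : HasDerivAt (fun t : ℝ => s x + t * a x) (a x) t := by
        simpa using ((hasDerivAt_id t).mul_const (a x)).const_add (s x)
      simpa [mul_comm] using (h1.exp.const_mul (w x)))
  constructor
  · simpa using key.1
  · simpa using key.2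

set_option maxHeartbeats 2000000 in

/-- **Stationarity of the α-divergence over an exponential family is moment matching
with the damped target.**  For a natural exponential family `q_λ ∝ exp⟨λ, T(x)⟩` and
`q_{λ,α} ∝ q_λ^{1−α} π^α`, the parameter `λ` is a stationary point of
`λ ↦ D_α(π ‖ q_λ)` iff `E_{q_λ}[T(X)] = E_{q_{λ,α}}[T(X)]`. -/
theorem alpha_divergence_stationary_iff_moment_matching
    {X : Type*} [MeasurableSpace X] (ν : Measure X) [SigmaFinite ν]
    (k : ℕ) (T : X → (Fin k → ℝ)) (hT : Measurable T)
    (ptgt : X → ℝ) (hπ_pos : ∀ x, 0 < ptgt x) (hπ_prob : ∫ x, ptgt x ∂ν = 1)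
    (α : ℝ) (hα : α ∈ Set.Ioo (0 : ℝ) 1)
    (Z : (Fin k → ℝ) → ℝ) (hZ : Z = fun l => ∫ x, Real.exp (l ⬝ᵥ T x) ∂ν)
    (qfam : (Fin k → ℝ) → X → ℝ)
    (hqfam : qfam = fun l x => Real.exp (l ⬝ᵥ T x) / Z l)
    (lam : Fin k → ℝ) (hZlam : 0 < Z lam)
    -- the damped target q_{λ,α} ∝ q_λ^{1−α} π^α
    (Zα : ℝ) (hZα : Zα = ∫ x, qfam lam x ^ (1 - α) * ptgt x ^ α ∂ν) (hZα_pos : 0 < Zα)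
    (qα : X → ℝ) (hqα : qα = fun x => qfam lam x ^ (1 - α) * ptgt x ^ α / Zα)
    -- the α-divergence as a function of the natural parameter
    (D : (Fin k → ℝ) → ℝ)
    (hD : D = fun l => (1 / (α * (1 - α))) *
      (1 - ∫ x, ptgt x ^ α * qfam l x ^ (1 - α) ∂ν))
    -- differentiability and integrability conditions
    (hDdiff : DifferentiableAt ℝ D lam)
    (hintT : Integrable (fun x => qfam lam x • T x) ν)
    (hintTα : Integrable (fun x => qα x • T x) ν) :
    (∀ i, fderiv ℝ D lam (Pi.single i 1) = 0) ↔
      (∫ x, qfam lam x • T x ∂ν) = ∫ x, qα x • T x ∂ν := by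
  obtain ⟨hα0, hα1⟩ := hα
  have h1α : (0:ℝ) < 1 - α := by linarith
  set c : ℝ := 1 / (α * (1 - α)) with hc_def
  have hc : 0 < c := by positivity
  -- measurability of dot products
  have hdot : ∀ l : Fin k → ℝ, Measurable fun x => l ⬝ᵥ T x := by
    intro l
    simp only [dotProduct]
    exact Finset.measurable_sum _ fun j _ => measurable_const.mul ((measurable_pi_apply j).comp hT)
  -- ptgt is integrable, hence a.e. strongly measurable
  have hπint : Integrable ptgt ν := by
    by_contra h
    rw [integral_undef h] at hπ_prob
    norm_num at hπ_prob
  have hπα_m : AEStronglyMeasurable (fun x => ptgt x ^ α) ν :=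
    (Real.continuous_rpow_const hα0.le).comp_aestronglyMeasurable hπint.aestronglyMeasurable
  -- the key regularity lemma: wherever D ≠ c, everything is integrable
  have key : ∀ l : Fin k → ℝ, D l ≠ c →
      0 < Z l ∧ Integrable (fun x => Real.exp (l ⬝ᵥ T x)) ν ∧
      Integrable (fun x => ptgt x ^ α * Real.exp ((1 - α) * (l ⬝ᵥ T x))) ν ∧
      (∫ x, ptgt x ^ α * qfam l x ^ (1 - α) ∂ν) =
        (∫ x, ptgt x ^ α * Real.exp ((1 - α) * (l ⬝ᵥ T x)) ∂ν) / (Z l) ^ (1 - α) := by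
    intro l hl
    have hZne : Z l ≠ 0 := by
      intro h
      apply hl
      rw [hD]
      simp only [hqfam, h, div_zero, Real.zero_rpow (ne_of_gt h1α), mul_zero,
        integral_zero, sub_zero, mul_one]
    have hZint : Integrable (fun x => Real.exp (l ⬝ᵥ T x)) ν := by
      by_contra h
      exact hZne (by rw [hZ]; exact integral_undef h)
    have hZpos : 0 < Z l := lt_of_le_of_ne
      (by rw [hZ]; exact integral_nonneg fun x => (Real.exp_pos _).le) (Ne.symm hZne)
    have hEeq : (∫ x, ptgt x ^ α * qfam l x ^ (1 - α) ∂ν) =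
        (∫ x, ptgt x ^ α * Real.exp ((1 - α) * (l ⬝ᵥ T x)) ∂ν) / (Z l) ^ (1 - α) := by
      rw [← integral_div]
      congr 1
      funext x
      rw [hqfam]
      simp only
      rw [Real.div_rpow (Real.exp_pos _).le hZpos.le, ← Real.exp_mul, mul_comm (l ⬝ᵥ T x) (1-α),
        mul_div_assoc]
    refine ⟨hZpos, hZint, ?_, hEeq⟩
    by_contra h
    apply hl
    rw [integral_undef h] at hEeq
    rw [hD]
    simp only [hEeq, zero_div, sub_zero, mul_one]
  -- value of D at lam
  have hElam : (∫ x, ptgt x ^ α * qfam lam x ^ (1 - α) ∂ν) = Zα := by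
    rw [hZα]
    exact integral_congr_ae (Eventually.of_forall fun x => (mul_comm _ _))
  have hDlam : D lam = c * (1 - Zα) := by rw [hD]; simp only [hElam]
  have hDne : D lam ≠ c := by
    rw [hDlam]
    intro h
    have : c * Zα = 0 := by linarith [h]
    rcases mul_eq_zero.1 this with h' | h'
    · exact (ne_of_gt hc) h'
    · exact (ne_of_gt hZα_pos) h'
  -- neighborhood where D ≠ c
  have hball : ∃ ε > 0, ∀ l ∈ Metric.ball lam ε, D l ≠ c := by
    have := hDdiff.continuousAt.eventually_ne hDne
    rcases Metric.eventually_nhds_iff_ball.1 this with ⟨ε, hε, h⟩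
    exact ⟨ε, hε, h⟩
  obtain ⟨ε, hε, hballne⟩ := hball
  have hlamball : lam ∈ Metric.ball lam ε := Metric.mem_ball_self hε
  -- basic constants
  have hZ0 : 0 < Z lam := hZlam
  have hZ0ne : Z lam ≠ 0 := ne_of_gt hZ0
  set P : ℝ := Z lam ^ (1 - α) with hP_def
  have hPpos : 0 < P := Real.rpow_pos_of_pos hZ0 _
  have hPne : P ≠ 0 := ne_of_gt hPpos
  obtain ⟨-, hZint, hGint, hEeqlam⟩ := key lam (hballne lam hlamball)
  -- G0 = Zα * P
  have hG0 : (∫ x, ptgt x ^ α * Real.exp ((1 - α) * (lam ⬝ᵥ T x)) ∂ν) = Zα * P := by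
    have := hEeqlam
    rw [hElam] at this
    field_simp [hP_def] at this ⊢
    linarith [this]
  -- main derivative formula
  have main : ∀ i : Fin k, fderiv ℝ D lam (Pi.single i 1) =
      (Zα / α) * ((∫ x, qfam lam x * T x i ∂ν) - (∫ x, qα x * T x i ∂ν)) := by
    intro i
    -- geometry of the segment through lam in direction i
    have hnorme : ‖(Pi.single i 1 : Fin k → ℝ)‖ = 1 := by
      rw [Pi.norm_single]; norm_num
    have hδ : (0:ℝ) < ε / 2 := by positivity
    have hmem : ∀ t : ℝ, |t| < ε → lam + t • (Pi.single i 1 : Fin k → ℝ) ∈ Metric.ball lam ε := by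
      intro t ht
      rw [Metric.mem_ball, dist_eq_norm, add_sub_cancel_left, norm_smul, hnorme, mul_one]
      simpa [Real.norm_eq_abs] using ht
    have hdote : ∀ (t : ℝ) (x : X),
        (lam + t • (Pi.single i 1 : Fin k → ℝ)) ⬝ᵥ T x = lam ⬝ᵥ T x + t * T x i := by
      intro t x
      rw [add_dotProduct, smul_dotProduct, single_dotProduct]
      simp
    have hmemp : lam + (ε/2) • (Pi.single i 1 : Fin k → ℝ) ∈ Metric.ball lam ε :=
      hmem _ (by rw [abs_of_pos hδ]; linarith)
    have hmemm : lam + (-(ε/2)) • (Pi.single i 1 : Fin k → ℝ) ∈ Metric.ball lam ε :=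
      hmem _ (by rw [abs_neg, abs_of_pos hδ]; linarith)
    obtain ⟨-, hZintp, hGintp, -⟩ := key _ (hballne _ hmemp)
    obtain ⟨-, hZintm, hGintm, -⟩ := key _ (hballne _ hmemm)
    -- derivative of the Z line
    have hZaux := aux_laplace_deriv ν (w := fun _ => (1:ℝ))
      (s := fun x => lam ⬝ᵥ T x) (a := fun x => T x i)
      aestronglyMeasurable_const (fun _ => zero_le_one) (hdot lam)
      ((measurable_pi_apply i).comp hT) hδ
      (by
        have := hZintp
        rw [show (fun x => Real.exp ((lam + (ε/2) • (Pi.single i 1 : Fin k → ℝ)) ⬝ᵥ T x))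
            = fun x => (1:ℝ) * Real.exp (lam ⬝ᵥ T x + (ε/2) * T x i) from
          funext fun x => by rw [hdote, one_mul]] at this
        exact this)
      (by
        have := hZintm
        rw [show (fun x => Real.exp ((lam + (-(ε/2)) • (Pi.single i 1 : Fin k → ℝ)) ⬝ᵥ T x))
            = fun x => (1:ℝ) * Real.exp (lam ⬝ᵥ T x - (ε/2) * T x i) from
          funext fun x => by rw [hdote, one_mul]; ring_nf] at this
        exact this)
      (by simpa [one_mul] using hZint)
    have hZ'int : Integrable (fun x => T x i * Real.exp (lam ⬝ᵥ T x)) ν := by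
      simpa [one_mul] using hZaux.1
    have hZd : HasDerivAt (fun t => ∫ x, Real.exp (lam ⬝ᵥ T x + t * T x i) ∂ν)
        (∫ x, T x i * Real.exp (lam ⬝ᵥ T x) ∂ν) 0 := by
      simpa [one_mul] using hZaux.2
    -- derivative of the G line
    have hGaux := aux_laplace_deriv ν (w := fun x => ptgt x ^ α)
      (s := fun x => (1 - α) * (lam ⬝ᵥ T x)) (a := fun x => (1 - α) * T x i)
      hπα_m (fun x => Real.rpow_nonneg (hπ_pos x).le α)
      (measurable_const.mul (hdot lam))
      (measurable_const.mul ((measurable_pi_apply i).comp hT)) hδ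
      (by
        have := hGintp
        rw [show (fun x => ptgt x ^ α *
              Real.exp ((1 - α) * ((lam + (ε/2) • (Pi.single i 1 : Fin k → ℝ)) ⬝ᵥ T x)))
            = fun x => ptgt x ^ α *
              Real.exp ((1 - α) * (lam ⬝ᵥ T x) + (ε/2) * ((1 - α) * T x i)) from
          funext fun x => by rw [hdote]; ring_nf] at this
        exact this)
      (by
        have := hGintm
        rw [show (fun x => ptgt x ^ α *
              Real.exp ((1 - α) * ((lam + (-(ε/2)) • (Pi.single i 1 : Fin k → ℝ)) ⬝ᵥ T x)))
            = fun x => ptgt x ^ α *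
              Real.exp ((1 - α) * (lam ⬝ᵥ T x) - (ε/2) * ((1 - α) * T x i)) from
          funext fun x => by rw [hdote]; ring_nf] at this
        exact this)
      hGint
    have hGd := hGaux.2
    -- evaluation of the Z line at 0
    have hzv : (∫ x, Real.exp (lam ⬝ᵥ T x + (0:ℝ) * T x i) ∂ν) = Z lam := by
      rw [hZ]; simp
    -- derivative of the composite map ψ
    have hpow := hZd.rpow_const (p := 1 - α) (Or.inl (by rw [hzv]; exact hZ0ne))
    have hpowne : (∫ x, Real.exp (lam ⬝ᵥ T x + (0:ℝ) * T x i) ∂ν) ^ (1 - α) ≠ 0 := by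
      rw [hzv]; exact hPne
    have hdiv := hGd.div hpow hpowne
    have hψ := (hdiv.const_sub 1).const_mul c
    -- derivative of φ(t) = D (lam + t • e)
    have hline : HasDerivAt (fun t : ℝ => lam + t • (Pi.single i 1 : Fin k → ℝ))
        (Pi.single i 1) 0 := by
      simpa using ((hasDerivAt_id (0:ℝ)).smul_const (Pi.single i (1:ℝ))).const_add lam
    have hDfd := hDdiff.hasFDerivAt
    have hg0 : lam + (0:ℝ) • (Pi.single i 1 : Fin k → ℝ) = lam := by simp
    rw [← hg0] at hDfd
    have hcomp : HasDerivAt (fun t : ℝ => D (lam + t • (Pi.single i 1 : Fin k → ℝ)))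
        (fderiv ℝ D lam (Pi.single i 1)) 0 := by
      have := hDfd.comp_hasDerivAt 0 hline
      rw [hg0] at this
      exact this
    -- φ and ψ agree near 0
    have heq : (fun t : ℝ => D (lam + t • (Pi.single i 1 : Fin k → ℝ))) =ᶠ[nhds (0:ℝ)]
        (fun t : ℝ => c * (1 -
          (∫ x, ptgt x ^ α * Real.exp ((1 - α) * (lam ⬝ᵥ T x) + t * ((1 - α) * T x i)) ∂ν) /
          (∫ x, Real.exp (lam ⬝ᵥ T x + t * T x i) ∂ν) ^ (1 - α))) := by
      filter_upwards [Metric.ball_mem_nhds (0:ℝ) hδ] with t ht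
      have htball : lam + t • (Pi.single i 1 : Fin k → ℝ) ∈ Metric.ball lam ε := by
        apply hmem
        have : |t| < ε / 2 := by simpa [Real.dist_eq] using ht
        linarith
      obtain ⟨-, -, -, hEeq⟩ := key _ (hballne _ htball)
      rw [hD]
      simp only
      rw [hEeq]
      have e1 : (∫ x, ptgt x ^ α *
            Real.exp ((1 - α) * ((lam + t • (Pi.single i 1 : Fin k → ℝ)) ⬝ᵥ T x)) ∂ν)
          = ∫ x, ptgt x ^ α *
            Real.exp ((1 - α) * (lam ⬝ᵥ T x) + t * ((1 - α) * T x i)) ∂ν :=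
        integral_congr_ae (Eventually.of_forall fun x => by simp only [hdote]; ring_nf)
      have e2 : Z (lam + t • (Pi.single i 1 : Fin k → ℝ))
          = ∫ x, Real.exp (lam ⬝ᵥ T x + t * T x i) ∂ν := by
        rw [hZ]
        exact integral_congr_ae (Eventually.of_forall fun x => by simp only [hdote])
      rw [e1, e2]
    have hder := hcomp.unique (hψ.congr_of_eventuallyEq heq)
    rw [hder]
    have hzv' : (∫ x, Real.exp (lam ⬝ᵥ T x) ∂ν) = Z lam := by rw [hZ]
    have hqpow : ∀ x, qfam lam x ^ (1 - α) = Real.exp ((1 - α) * (lam ⬝ᵥ T x)) / P := by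
      intro x
      rw [hqfam]
      simp only
      rw [Real.div_rpow (Real.exp_pos _).le hZ0.le, ← Real.exp_mul, mul_comm]
    have hMi : (∫ x, qfam lam x * T x i ∂ν)
        = (∫ x, T x i * Real.exp (lam ⬝ᵥ T x) ∂ν) / Z lam := by
      rw [← integral_div]
      refine integral_congr_ae (Eventually.of_forall fun x => ?_)
      rw [hqfam]
      simp only
      ring
    have hNi : (∫ x, qα x * T x i ∂ν)
        = (∫ x, ptgt x ^ α * (T x i * Real.exp ((1 - α) * (lam ⬝ᵥ T x))) ∂ν) / (P * Zα) := by
      rw [← integral_div]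
      refine integral_congr_ae (Eventually.of_forall fun x => ?_)
      rw [hqα]
      simp only
      rw [hqpow x]
      ring
    have hGW : (∫ x, ptgt x ^ α * ((1 - α) * T x i * Real.exp ((1 - α) * (lam ⬝ᵥ T x))) ∂ν)
        = (1 - α) * ∫ x, ptgt x ^ α * (T x i * Real.exp ((1 - α) * (lam ⬝ᵥ T x))) ∂ν := by
      rw [← integral_const_mul]
      exact integral_congr_ae (Eventually.of_forall fun x => by ring)
    have hsub : Z lam ^ (1 - α - 1) = P / Z lam := by
      rw [Real.rpow_sub hZ0, Real.rpow_one]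
    simp only [zero_mul, add_zero]
    rw [hzv', hG0, hGW, hMi, hNi, hsub, hc_def]
    have hαne : α ≠ 0 := ne_of_gt hα0
    have h1αne : (1 - α) ≠ 0 := ne_of_gt h1α
    have hZαne : Zα ≠ 0 := ne_of_gt hZα_pos
    field_simp
    ring
  -- conclude
  constructor
  · intro h
    funext i
    have h1 : (∫ x, qfam lam x • T x ∂ν) i = ∫ x, qfam lam x * T x i ∂ν := by
      simpa [ContinuousLinearMap.proj_apply, smul_eq_mul] using
        (ContinuousLinearMap.integral_comp_comm (ContinuousLinearMap.proj (R := ℝ)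
          (φ := fun _ : Fin k => ℝ) i) hintT).symm
    have h2 : (∫ x, qα x • T x ∂ν) i = ∫ x, qα x * T x i ∂ν := by
      simpa [ContinuousLinearMap.proj_apply, smul_eq_mul] using
        (ContinuousLinearMap.integral_comp_comm (ContinuousLinearMap.proj (R := ℝ)
          (φ := fun _ : Fin k => ℝ) i) hintTα).symm
    rw [h1, h2]
    have h3 := h i
    rw [main i] at h3
    have h4 : (Zα / α) ≠ 0 := ne_of_gt (by positivity)
    have h5 := (mul_eq_zero.1 h3).resolve_left h4
    linarith [h5]
  · intro h i
    rw [main i]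
    have h1 : (∫ x, qfam lam x * T x i ∂ν) = ∫ x, qα x * T x i ∂ν := by
      have h1' : (∫ x, qfam lam x • T x ∂ν) i = (∫ x, qα x • T x ∂ν) i := by rw [h]
      have e1 : (∫ x, qfam lam x • T x ∂ν) i = ∫ x, qfam lam x * T x i ∂ν := by
        simpa [ContinuousLinearMap.proj_apply, smul_eq_mul] using
          (ContinuousLinearMap.integral_comp_comm (ContinuousLinearMap.proj (R := ℝ)
            (φ := fun _ : Fin k => ℝ) i) hintT).symm
      have e2 : (∫ x, qα x • T x ∂ν) i = ∫ x, qα x * T x i ∂ν := by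
        simpa [ContinuousLinearMap.proj_apply, smul_eq_mul] using
          (ContinuousLinearMap.integral_comp_comm (ContinuousLinearMap.proj (R := ℝ)
            (φ := fun _ : Fin k => ℝ) i) hintTα).symm
      rw [← e1, ← e2]
      exact h1'
    rw [h1, sub_self, mul_zero]
end

section
/- Let q = N(μ, Γ) and π be densities with π absolutely continuous with respect to q, and let w(x) = π(x)/q(x). If E_q[w(X)²] < ∞, then the self-normalized importance sampling estimator of E_π[φ(X)] with S i.i.d. samples from q, for bounded measurable φ, has root-mean-square error bounded by C/√S where C depends only on E_q[w(X)²] and sup|φ|. -/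
open MeasureTheory ProbabilityTheory Real

set_option maxHeartbeats 1000000

lemma snis_aux_integrable_mul {α : Type*} [MeasurableSpace α] {μ : Measure α}
    {f g : α → ℝ} (hf : MemLp f 2 μ) (hg : MemLp g 2 μ) :
    Integrable (fun x => f x * g x) μ := by
  refine ((hf.integrable_sq.add hg.integrable_sq).const_mul (1/2)).mono'
    (hf.1.mul hg.1) (ae_of_all _ fun x => ?_)
  rw [Real.norm_eq_abs, abs_mul]
  simp only [Pi.add_apply]
  nlinarith [sq_nonneg (|f x| - |g x|), sq_abs (f x), sq_abs (g x),
    abs_nonneg (f x), abs_nonneg (g x)]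

lemma snis_aux_cs {α : Type*} [MeasurableSpace α] {μ : Measure α}
    {f g : α → ℝ} (hf : MemLp f 2 μ) (hg : MemLp g 2 μ) :
    ∫ x, f x * g x ∂μ ≤
      Real.sqrt (∫ x, f x ^ 2 ∂μ) * Real.sqrt (∫ x, g x ^ 2 ∂μ) := by
  have h1 : ∫ x, f x * g x ∂μ ≤ ∫ x, |f x| * |g x| ∂μ := by
    calc ∫ x, f x * g x ∂μ ≤ |∫ x, f x * g x ∂μ| := le_abs_self _
      _ ≤ ∫ x, |f x| * |g x| ∂μ := by
          simpa [Real.norm_eq_abs, abs_mul] using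
            norm_integral_le_integral_norm (f := fun x => f x * g x) (μ := μ)
  have h2 : ∫ x, |f x| * |g x| ∂μ ≤
      (∫ x, |f x| ^ (2:ℝ) ∂μ) ^ ((1:ℝ)/2) * (∫ x, |g x| ^ (2:ℝ) ∂μ) ^ ((1:ℝ)/2) := by
    refine integral_mul_le_Lp_mul_Lq_of_nonneg (Real.holderConjugate_iff.mpr ⟨one_lt_two, by norm_num⟩)
      (ae_of_all _ fun x => abs_nonneg _) (ae_of_all _ fun x => abs_nonneg _) ?_ ?_
    · simpa [ENNReal.ofReal_ofNat, Real.norm_eq_abs] using hf.norm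
    · simpa [ENNReal.ofReal_ofNat, Real.norm_eq_abs] using hg.norm
  refine le_trans h1 (le_trans h2 (le_of_eq ?_))
  congr 1
  · rw [Real.sqrt_eq_rpow]
    congr 1
    refine integral_congr_ae (ae_of_all _ fun x => ?_)
    simp [Real.rpow_two, sq_abs]
  · rw [Real.sqrt_eq_rpow]
    congr 1
    refine integral_congr_ae (ae_of_all _ fun x => ?_)
    simp [Real.rpow_two, sq_abs]

lemma snis_aux_tri {α : Type*} [MeasurableSpace α] {μ : Measure α}
    {f g : α → ℝ} (hf : MemLp f 2 μ) (hg : MemLp g 2 μ) :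
    Real.sqrt (∫ x, (f x + g x) ^ 2 ∂μ) ≤
      Real.sqrt (∫ x, f x ^ 2 ∂μ) + Real.sqrt (∫ x, g x ^ 2 ∂μ) := by
  have hf2 : (0:ℝ) ≤ ∫ x, f x ^ 2 ∂μ := integral_nonneg fun x => sq_nonneg _
  have hg2 : (0:ℝ) ≤ ∫ x, g x ^ 2 ∂μ := integral_nonneg fun x => sq_nonneg _
  have hint : ∫ x, (f x + g x) ^ 2 ∂μ
      = ∫ x, f x ^ 2 ∂μ + 2 * ∫ x, f x * g x ∂μ + ∫ x, g x ^ 2 ∂μ := by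
    have h1 : Integrable (fun x => f x ^ 2) μ := hf.integrable_sq
    have h2 : Integrable (fun x => g x ^ 2) μ := hg.integrable_sq
    have h3 : Integrable (fun x => f x * g x) μ := snis_aux_integrable_mul hf hg
    rw [show (fun x => (f x + g x) ^ 2)
        = fun x => (f x ^ 2 + 2 * (f x * g x)) + g x ^ 2 from funext fun x => by ring]
    have e1 : Integrable (fun x => f x ^ 2 + 2 * (f x * g x)) μ := by
      exact h1.add (h3.const_mul 2)
    have e2 : Integrable (fun x => 2 * (f x * g x)) μ := by exact h3.const_mul 2
    rw [integral_add e1 h2, integral_add h1 e2, integral_const_mul]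
  rw [show Real.sqrt (∫ x, f x ^ 2 ∂μ) + Real.sqrt (∫ x, g x ^ 2 ∂μ)
    = Real.sqrt ((Real.sqrt (∫ x, f x ^ 2 ∂μ) + Real.sqrt (∫ x, g x ^ 2 ∂μ)) ^ 2)
    from (Real.sqrt_sq (by positivity)).symm]
  apply Real.sqrt_le_sqrt
  rw [add_sq, Real.sq_sqrt hf2, Real.sq_sqrt hg2, hint]
  have := snis_aux_cs hf hg
  nlinarith

/-- **RMSE bound for self-normalized importance sampling** (Agapiou et al., 2017).
With weight `w = π/q` satisfying `E_q[w] = 1` and `E_q[w²] < ∞`, the self-normalized IS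
estimator of `E_π[φ]` for bounded `φ` built from `S` i.i.d. samples from `q` has
root-mean-square error at most `2 · sup|φ| · √(E_q[w²]) / √S`. -/
theorem snis_rmse_bound
    {Ω : Type*} [MeasurableSpace Ω] (P : Measure Ω) [IsProbabilityMeasure P]
    {E : Type*} [MeasurableSpace E] (Q : Measure E) [IsProbabilityMeasure Q]
    (w : E → ℝ) (hw_meas : Measurable w) (hw_nonneg : ∀ x, 0 ≤ w x)
    (hw_mean : ∫ x, w x ∂Q = 1)
    (hw_sq : Integrable (fun x => w x ^ 2) Q)
    (φ : E → ℝ) (hφ_meas : Measurable φ) (M : ℝ) (hM : ∀ x, |φ x| ≤ M)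
    (S : ℕ) (hS : 0 < S)
    (X : Fin S → Ω → E) (hX_meas : ∀ s, Measurable (X s))
    (hiid : iIndepFun X P)
    (hlaw : ∀ s, Measure.map (X s) P = Q)
    (est : Ω → ℝ)
    (hest : est = fun ω => (∑ s, w (X s ω) * φ (X s ω)) / ∑ s, w (X s ω)) :
    Real.sqrt (∫ ω, (est ω - ∫ x, w x * φ x ∂Q) ^ 2 ∂P) ≤
      2 * M * Real.sqrt (∫ x, w x ^ 2 ∂Q) / Real.sqrt S := by
  -- nonemptiness and basic facts
  have hE : Nonempty E := by
    by_contra h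
    rw [not_nonempty_iff] at h
    have h1 : Q Set.univ = 1 := measure_univ
    rw [Set.univ_eq_empty_iff.2 h] at h1
    simp at h1
  obtain ⟨x0⟩ := hE
  have hM0 : 0 ≤ M := le_trans (abs_nonneg _) (hM x0)
  set I := ∫ x, w x ^ 2 ∂Q with hIdef
  set μ0 := ∫ x, w x * φ x ∂Q with hμ0def
  set J := ∫ x, (w x * φ x) ^ 2 ∂Q with hJdef
  have hI0 : 0 ≤ I := integral_nonneg fun x => sq_nonneg _
  have hS0 : (0:ℝ) < (S:ℝ) := by exact_mod_cast hS
  have hSne : (S:ℝ) ≠ 0 := ne_of_gt hS0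
  -- the component random variables
  set Zf : Fin S → Ω → ℝ := fun s ω => w (X s ω) * φ (X s ω) with hZf
  set Yf : Fin S → Ω → ℝ := fun s ω => w (X s ω) with hYf
  set T : Ω → ℝ := fun ω => ∑ s, Zf s ω with hTdef
  set U : Ω → ℝ := fun ω => ∑ s, Yf s ω with hUdef
  have hest' : est = fun ω => T ω / U ω := by
    simp only [hTdef, hUdef, hZf, hYf]; exact hest
  -- integrability over Q
  have hzsq_bd : ∀ x, (w x * φ x) ^ 2 ≤ M ^ 2 * w x ^ 2 := by
    intro x
    have h1 : |φ x| ≤ M := hM x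
    have h2 : φ x ^ 2 ≤ M ^ 2 := by
      nlinarith [abs_nonneg (φ x), sq_abs (φ x)]
    calc (w x * φ x) ^ 2 = w x ^ 2 * φ x ^ 2 := by ring
      _ ≤ w x ^ 2 * M ^ 2 := mul_le_mul_of_nonneg_left h2 (sq_nonneg _)
      _ = M ^ 2 * w x ^ 2 := by ring
  have hzsq : Integrable (fun x => (w x * φ x) ^ 2) Q := by
    refine (hw_sq.const_mul (M ^ 2)).mono'
      ((hw_meas.mul hφ_meas).pow_const 2).aestronglyMeasurable
      (ae_of_all _ fun x => ?_)
    rw [Real.norm_eq_abs, abs_of_nonneg (sq_nonneg _)]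
    exact hzsq_bd x
  have hwQ : MemLp w 2 Q :=
    (memLp_two_iff_integrable_sq hw_meas.aestronglyMeasurable).2 hw_sq
  have hzQ : MemLp (fun x => w x * φ x) 2 Q :=
    (memLp_two_iff_integrable_sq (hw_meas.mul hφ_meas).aestronglyMeasurable).2 hzsq
  have hJI : J ≤ M ^ 2 * I := by
    rw [hJdef, hIdef, ← integral_const_mul]
    exact integral_mono hzsq (hw_sq.const_mul _) hzsq_bd
  -- transfer to P
  have hYP : ∀ s, MemLp (Yf s) 2 P := by
    intro s
    have h := hwQ
    rw [← hlaw s] at h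
    exact (memLp_map_measure_iff hw_meas.aestronglyMeasurable
      (hX_meas s).aemeasurable).1 h
  have hZP : ∀ s, MemLp (Zf s) 2 P := by
    intro s
    have h := hzQ
    rw [← hlaw s] at h
    exact (memLp_map_measure_iff (hw_meas.mul hφ_meas).aestronglyMeasurable
      (hX_meas s).aemeasurable).1 h
  have hmap : ∀ (s : Fin S) (h : E → ℝ), Measurable h →
      ∫ ω, h (X s ω) ∂P = ∫ x, h x ∂Q := by
    intro s h hh
    rw [← hlaw s, integral_map (hX_meas s).aemeasurable hh.aestronglyMeasurable]
  -- expectations of components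
  have hEY : ∀ s, ∫ ω, Yf s ω ∂P = 1 := fun s => by
    rw [hYf]; rw [hmap s w hw_meas, hw_mean]
  have hEY2 : ∀ s, ∫ ω, Yf s ω ^ 2 ∂P = I := fun s => by
    rw [hYf, hIdef]; exact hmap s (fun x => w x ^ 2) (hw_meas.pow_const 2)
  have hEZ : ∀ s, ∫ ω, Zf s ω ∂P = μ0 := fun s => by
    rw [hZf, hμ0def]; exact hmap s (fun x => w x * φ x) (hw_meas.mul hφ_meas)
  have hEZ2 : ∀ s, ∫ ω, Zf s ω ^ 2 ∂P = J := fun s => by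
    rw [hZf, hJdef]
    exact hmap s (fun x => (w x * φ x) ^ 2) ((hw_meas.mul hφ_meas).pow_const 2)
  -- variances of components
  have hVarY : ∀ s : Fin S, variance (Yf s) P = I - 1 := by
    intro s
    rw [variance_eq_sub (hYP s)]
    simp only [Pi.pow_apply]
    rw [hEY2 s, hEY s]
    norm_num
  have hVarZ : ∀ s : Fin S, variance (Zf s) P = J - μ0 ^ 2 := by
    intro s
    rw [variance_eq_sub (hZP s)]
    simp only [Pi.pow_apply]
    rw [hEZ2 s, hEZ s]
  -- variance of the sums
  have hTsum : T = ∑ s : Fin S, Zf s := by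
    funext ω; simp [hTdef, Finset.sum_apply]
  have hUsum : U = ∑ s : Fin S, Yf s := by
    funext ω; simp [hUdef, Finset.sum_apply]
  have hPairZ : Set.Pairwise ↑(Finset.univ : Finset (Fin S))
      fun i j => IndepFun (Zf i) (Zf j) P := by
    intro i _ j _ hij
    exact (hiid.indepFun hij).comp (hw_meas.mul hφ_meas) (hw_meas.mul hφ_meas)
  have hPairY : Set.Pairwise ↑(Finset.univ : Finset (Fin S))
      fun i j => IndepFun (Yf i) (Yf j) P := by
    intro i _ j _ hij
    exact (hiid.indepFun hij).comp hw_meas hw_meas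
  have hTmem : MemLp T 2 P := by
    rw [hTsum]; exact memLp_finset_sum' _ fun i _ => hZP i
  have hUmem : MemLp U 2 P := by
    rw [hUsum]; exact memLp_finset_sum' _ fun i _ => hYP i
  have hVarT : variance T P = S * (J - μ0 ^ 2) := by
    rw [hTsum, IndepFun.variance_sum (fun i _ => hZP i) hPairZ]
    simp [hVarZ, Finset.sum_const, Finset.card_univ, nsmul_eq_mul]
    ring
  have hVarU : variance U P = S * (I - 1) := by
    rw [hUsum, IndepFun.variance_sum (fun i _ => hYP i) hPairY]
    simp [hVarY, Finset.sum_const, Finset.card_univ, nsmul_eq_mul]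
    ring
  -- means of the sums
  have hET : ∫ ω, T ω ∂P = S * μ0 := by
    rw [hTdef]
    rw [integral_finset_sum _ fun i _ => (hZP i).integrable one_le_two]
    simp [hEZ, Finset.sum_const, Finset.card_univ, nsmul_eq_mul]
  have hEU : ∫ ω, U ω ∂P = S := by
    rw [hUdef]
    rw [integral_finset_sum _ fun i _ => (hYP i).integrable one_le_two]
    simp [hEY, Finset.sum_const, Finset.card_univ, nsmul_eq_mul]
  -- second moments of centered sums
  have hTvar : ∫ ω, (T ω - S * μ0) ^ 2 ∂P = S * (J - μ0 ^ 2) := by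
    rw [← hVarT, variance_eq_integral hTmem.aemeasurable, hET]
  have hUvar : ∫ ω, (U ω - S) ^ 2 ∂P = S * (I - 1) := by
    rw [← hVarU, variance_eq_integral hUmem.aemeasurable, hEU]
  -- the two pieces
  set f : Ω → ℝ := fun ω => T ω / S - μ0 with hfdef
  set g : Ω → ℝ := fun ω => est ω * (1 - U ω / S) with hgdef
  have hUnneg : ∀ ω, 0 ≤ U ω := fun ω =>
    Finset.sum_nonneg fun s _ => hw_nonneg _
  have hbd_est : ∀ ω, |est ω| ≤ M := by
    intro ω
    rw [hest']
    rcases eq_or_ne (U ω) 0 with h0 | h0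
    · simp [h0, hM0]
    · have hUpos : 0 < U ω := lt_of_le_of_ne (hUnneg ω) (Ne.symm h0)
      rw [abs_div, abs_of_pos hUpos, div_le_iff₀ hUpos]
      calc |T ω| ≤ ∑ s, |Zf s ω| := Finset.abs_sum_le_sum_abs _ _
        _ ≤ ∑ s, M * Yf s ω := by
            refine Finset.sum_le_sum fun s _ => ?_
            rw [hZf, hYf]
            simp only []
            rw [abs_mul, abs_of_nonneg (hw_nonneg _), mul_comm]
            exact mul_le_mul_of_nonneg_right (hM _) (hw_nonneg _)
        _ = M * U ω := by rw [hUdef, ← Finset.mul_sum]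
  have hkey : ∀ ω, est ω - μ0 = f ω + g ω := by
    intro ω
    rw [hfdef, hgdef, hest']
    rcases eq_or_ne (U ω) 0 with h0 | h0
    · have hT0 : T ω = 0 := by
        rw [hTdef]
        refine Finset.sum_eq_zero fun s _ => ?_
        have hws : Yf s ω = 0 :=
          (Finset.sum_eq_zero_iff_of_nonneg fun i _ => hw_nonneg _).1 h0 s
            (Finset.mem_univ s)
        rw [hZf]
        rw [hYf] at hws
        simp only [] at hws ⊢
        rw [hws, zero_mul]
      simp [h0, hT0]
    · field_simp
      ring
  -- measurability
  have hTm : Measurable T := by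
    rw [hTdef]
    exact Finset.measurable_sum _ fun s _ =>
      ((hw_meas.comp (hX_meas s)).mul (hφ_meas.comp (hX_meas s)))
  have hUm : Measurable U := by
    rw [hUdef]
    exact Finset.measurable_sum _ fun s _ => hw_meas.comp (hX_meas s)
  have hestm : Measurable est := by
    rw [hest']; exact hTm.div hUm
  -- MemLp of the pieces
  have hfmem : MemLp f 2 P := by
    have hfeq : f = fun ω => (S:ℝ)⁻¹ * T ω - μ0 := by
      rw [hfdef]; funext ω; ring
    rw [hfeq]
    exact (hTmem.const_mul _).sub (memLp_const μ0)
  have hBmem : MemLp (fun ω => 1 - U ω / (S:ℝ)) 2 P := by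
    have hBeq : (fun ω => 1 - U ω / (S:ℝ)) = fun ω => (1:ℝ) - (S:ℝ)⁻¹ * U ω := by
      funext ω; ring
    rw [hBeq]
    exact (memLp_const 1).sub (hUmem.const_mul _)
  have hgmem : MemLp g 2 P := by
    refine MemLp.of_le_mul (c := M) hBmem
      (hestm.mul (measurable_const.sub (hUm.div_const _))).aestronglyMeasurable
      (ae_of_all _ fun ω => ?_)
    rw [hgdef]
    simp only [Real.norm_eq_abs, abs_mul]
    exact mul_le_mul_of_nonneg_right (hbd_est ω) (abs_nonneg _)
  -- quantitative bounds
  have hf2 : ∫ ω, f ω ^ 2 ∂P ≤ M ^ 2 * I / S := by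
    have hfeq2 : (fun ω => f ω ^ 2) = fun ω => (T ω - S * μ0) ^ 2 / (S:ℝ) ^ 2 := by
      funext ω
      rw [hfdef]
      field_simp
    rw [hfeq2, integral_div, hTvar]
    rw [div_le_div_iff₀ (by positivity) hS0]
    have : J - μ0 ^ 2 ≤ M ^ 2 * I := le_trans (by nlinarith [sq_nonneg μ0]) hJI
    nlinarith [hS0, sq_nonneg μ0]
  have hB2 : ∫ ω, (1 - U ω / (S:ℝ)) ^ 2 ∂P = (I - 1) / S := by
    have hBeq2 : (fun ω => (1 - U ω / (S:ℝ)) ^ 2)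
        = fun ω => (U ω - S) ^ 2 / (S:ℝ) ^ 2 := by
      funext ω
      field_simp
      ring
    rw [hBeq2, integral_div, hUvar]
    field_simp
  have hI1 : 0 ≤ I - 1 := by
    have h := hUvar
    have h2 : 0 ≤ ∫ ω, (U ω - S) ^ 2 ∂P := integral_nonneg fun ω => sq_nonneg _
    nlinarith
  have hg2 : ∫ ω, g ω ^ 2 ∂P ≤ M ^ 2 * I / S := by
    have step1 : ∫ ω, g ω ^ 2 ∂P ≤ ∫ ω, M ^ 2 * (1 - U ω / (S:ℝ)) ^ 2 ∂P := by
      refine integral_mono hgmem.integrable_sq (hBmem.integrable_sq.const_mul _)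
        fun ω => ?_
      rw [hgdef]
      simp only []
      rw [mul_pow]
      refine mul_le_mul_of_nonneg_right ?_ (sq_nonneg _)
      nlinarith [hbd_est ω, sq_abs (est ω), abs_nonneg (est ω)]
    rw [integral_const_mul, hB2] at step1
    refine le_trans step1 ?_
    rw [show M ^ 2 * ((I - 1) / (S:ℝ)) = M ^ 2 * (I - 1) / (S:ℝ) from by ring]
    gcongr
    linarith
  -- assembling
  have hcongr : (fun ω => (est ω - μ0) ^ 2) = fun ω => (f ω + g ω) ^ 2 := by
    funext ω; rw [hkey ω]
  have hsq : Real.sqrt (M ^ 2 * I / S) = M * Real.sqrt I / Real.sqrt S := by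
    rw [show M ^ 2 * I / (S:ℝ) = (M * Real.sqrt I / Real.sqrt (S:ℝ)) ^ 2 by
      rw [div_pow, mul_pow, Real.sq_sqrt hI0, Real.sq_sqrt hS0.le]]
    exact Real.sqrt_sq (by positivity)
  calc Real.sqrt (∫ ω, (est ω - μ0) ^ 2 ∂P)
      = Real.sqrt (∫ ω, (f ω + g ω) ^ 2 ∂P) := by rw [hcongr]
    _ ≤ Real.sqrt (∫ ω, f ω ^ 2 ∂P) + Real.sqrt (∫ ω, g ω ^ 2 ∂P) :=
        snis_aux_tri hfmem hgmem
    _ ≤ Real.sqrt (M ^ 2 * I / S) + Real.sqrt (M ^ 2 * I / S) :=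
        add_le_add (Real.sqrt_le_sqrt hf2) (Real.sqrt_le_sqrt hg2)
    _ = 2 * M * Real.sqrt I / Real.sqrt S := by rw [hsq]; ring
end
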